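/- arXiv:2602.03774 — 2 statements merged into one kernel-verified Lean document; each statement's English description precedes it below -/
import Mathlib

section
/- For any r-tuples x, y ∈ {-1,1}^n, Σ_{v₁,…,v_r ∈ [n]} f(x_{v₁},…,x_{v_r}) f(y_{v₁},…,y_{v_r}) = n^r · ((1+o)^r + (1−o)^r − 2)/2 + E, where o = (1/n)Σ_i x_i y_i and the error term E vanishes whenever Σ_i x_i = Σ_i y_i = 0. In particular, if Σ_i x_i = Σ_i y_i = 0 then the left side equals n^r((1+o)^r + (1−o)^r − 2)/2. -/
open Finset

lemma even_sum_eq' (r : ℕ) (z : Fin r → ℝ) :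
    ∑ m ∈ Finset.Icc 1 (r / 2),
      ∑ R ∈ Finset.powersetCard (2 * m) (Finset.univ : Finset (Fin r)),
        ∏ j ∈ R, z j
    = (∏ j, (1 + z j) + ∏ j, (1 - z j)) / 2 - 1 := by
  have h1 : ∏ j, (1 + z j) = ∑ R ∈ (univ : Finset (Fin r)).powerset, ∏ j ∈ R, z j := by
    have := Finset.prod_add z (fun _ => (1:ℝ)) (univ : Finset (Fin r))
    simpa [add_comm] using this
  have hneg : ∀ R : Finset (Fin r), ∏ j ∈ R, (-z j) = (-1) ^ R.card * ∏ j ∈ R, z j := by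
    intro R
    rw [← Finset.prod_const, ← Finset.prod_mul_distrib]
    simp
  have h2 : ∏ j, (1 - z j) = ∑ R ∈ (univ : Finset (Fin r)).powerset,
      (-1) ^ R.card * ∏ j ∈ R, z j := by
    have := Finset.prod_add (fun j => -z j) (fun _ => (1:ℝ)) (univ : Finset (Fin r))
    simp only [Finset.prod_const_one, mul_one, hneg] at this
    simpa [sub_eq_add_neg, add_comm] using this
  -- sum over even-card subsets
  have heven : ∑ R ∈ (univ : Finset (Fin r)).powerset.filter (fun R => Even R.card),
      ∏ j ∈ R, z j
      = (∏ j, (1 + z j) + ∏ j, (1 - z j)) / 2 := by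
    rw [h1, h2, ← Finset.sum_add_distrib, Finset.sum_filter, eq_div_iff (by norm_num : (2:ℝ) ≠ 0),
      Finset.sum_mul]
    refine Finset.sum_congr rfl fun R _ => ?_
    by_cases h : Even R.card
    · simp [h, h.neg_one_pow]; ring
    · simp [h, (Nat.not_even_iff_odd.mp h).neg_one_pow]
  -- LHS is the sum over nonempty even-card subsets
  have hset : (Finset.Icc 1 (r / 2)).biUnion
      (fun m => Finset.powersetCard (2 * m) (Finset.univ : Finset (Fin r)))
      = (univ : Finset (Fin r)).powerset.filter (fun R => Even R.card ∧ R ≠ ∅) := by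
    ext R
    simp only [Finset.mem_biUnion, Finset.mem_Icc, Finset.mem_powersetCard_univ,
      Finset.mem_filter, Finset.mem_powerset, Finset.subset_univ, true_and]
    constructor
    · rintro ⟨m, ⟨hm1, hm2⟩, hc⟩
      refine ⟨⟨m, by omega⟩, ?_⟩
      intro h
      rw [h] at hc
      simp at hc
      omega
    · rintro ⟨⟨m, hm⟩, hne⟩
      refine ⟨m, ⟨?_, ?_⟩, by omega⟩
      · rcases Nat.eq_zero_or_pos m with h | h
        · exfalso; apply hne; rw [← Finset.card_eq_zero]; omega
        · exact h
      · have := Finset.card_le_univ R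
        simp at this
        omega
  have hdisj : (Finset.Icc 1 (r / 2) : Set ℕ).PairwiseDisjoint
      (fun m => Finset.powersetCard (2 * m) (Finset.univ : Finset (Fin r))) := by
    intro a _ b _ hab
    apply Finset.disjoint_left.mpr
    intro R hR hR'
    simp only [Finset.mem_powersetCard_univ] at hR hR'
    omega
  rw [← Finset.sum_biUnion hdisj] at *
  rw [hset]
  have : (univ : Finset (Fin r)).powerset.filter (fun R => Even R.card ∧ R ≠ ∅)
      = ((univ : Finset (Fin r)).powerset.filter (fun R => Even R.card)).erase ∅ := by
    ext R
    simp only [Finset.mem_filter, Finset.mem_erase]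
    tauto
  rw [this, ← heven]
  have hmem : (∅ : Finset (Fin r)) ∈ (univ : Finset (Fin r)).powerset.filter
      (fun R => Even R.card) := by simp
  have := Finset.add_sum_erase _ (fun R => ∏ j ∈ R, z j) hmem
  simp only [Finset.prod_empty] at this
  linarith

lemma sum_prod_comp' (n r : ℕ) (g : Fin n → ℝ) :
    ∑ v : Fin r → Fin n, ∏ j, g (v j) = (∑ i, g i) ^ r := by
  calc ∑ v : Fin r → Fin n, ∏ j, g (v j)
      = ∑ v ∈ Fintype.piFinset (fun _ : Fin r => (univ : Finset (Fin n))), ∏ j, g (v j) := by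
        rw [Fintype.piFinset_univ]
    _ = ∏ _j : Fin r, ∑ i, g i := (Finset.prod_univ_sum _ _).symm
    _ = (∑ i, g i) ^ r := by simp

/-- For `x, y ∈ {-1,1}^n` with zero coordinate sums,
`Σ_{v₁,…,v_r ∈ [n]} f(x_{v₁},…,x_{v_r}) f(y_{v₁},…,y_{v_r})
  = n^r · ((1 + o)^r + (1 − o)^r − 2)/2`,
where `o = (1/n) Σ_i x_i y_i` and
`f(x₁,…,x_r) = Σ_{m=1}^{⌊r/2⌋} Σ_{R ⊆ [r], |R| = 2m} ∏_{j ∈ R} x_j`. -/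
theorem sum_ff_overlap_eq (n r : ℕ) (hn : 0 < n) (hr : 0 < r) (x y : Fin n → ℝ)
    (hx : ∀ i, x i = -1 ∨ x i = 1) (hy : ∀ i, y i = -1 ∨ y i = 1)
    (hxs : ∑ i, x i = 0) (hys : ∑ i, y i = 0) :
    (∑ v : Fin r → Fin n,
        (∑ m ∈ Finset.Icc 1 (r / 2),
            ∑ R ∈ Finset.powersetCard (2 * m) (Finset.univ : Finset (Fin r)),
              ∏ j ∈ R, x (v j)) *
        (∑ m ∈ Finset.Icc 1 (r / 2),
            ∑ R ∈ Finset.powersetCard (2 * m) (Finset.univ : Finset (Fin r)),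
              ∏ j ∈ R, y (v j)))
      = (n : ℝ) ^ r *
          ((1 + (∑ i, x i * y i) / n) ^ r + (1 - (∑ i, x i * y i) / n) ^ r - 2) / 2 := by
  have hn' : (n : ℝ) ≠ 0 := Nat.cast_ne_zero.mpr hn.ne'
  set s : ℝ := ∑ i, x i * y i with hs
  have step : ∀ v : Fin r → Fin n,
      (∑ m ∈ Finset.Icc 1 (r / 2),
          ∑ R ∈ Finset.powersetCard (2 * m) (Finset.univ : Finset (Fin r)),
            ∏ j ∈ R, x (v j)) *
      (∑ m ∈ Finset.Icc 1 (r / 2),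
          ∑ R ∈ Finset.powersetCard (2 * m) (Finset.univ : Finset (Fin r)),
            ∏ j ∈ R, y (v j))
      = (∏ j, ((1 + x (v j)) * (1 + y (v j))) + ∏ j, ((1 + x (v j)) * (1 - y (v j)))
          + ∏ j, ((1 - x (v j)) * (1 + y (v j))) + ∏ j, ((1 - x (v j)) * (1 - y (v j)))) / 4
        - (∏ j, (1 + x (v j)) + ∏ j, (1 - x (v j))
            + ∏ j, (1 + y (v j)) + ∏ j, (1 - y (v j))) / 2
        + 1 := by
    intro v
    rw [even_sum_eq' r (fun j => x (v j)), even_sum_eq' r (fun j => y (v j)),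
      Finset.prod_mul_distrib, Finset.prod_mul_distrib, Finset.prod_mul_distrib,
      Finset.prod_mul_distrib]
    ring
  rw [Finset.sum_congr rfl fun v _ => step v]
  simp only [← Finset.sum_div, Finset.sum_add_distrib, Finset.sum_sub_distrib,
    Finset.sum_const, Finset.card_univ, nsmul_eq_mul, mul_one]
  rw [sum_prod_comp' n r (fun i => (1 + x i) * (1 + y i)),
    sum_prod_comp' n r (fun i => (1 + x i) * (1 - y i)),
    sum_prod_comp' n r (fun i => (1 - x i) * (1 + y i)),
    sum_prod_comp' n r (fun i => (1 - x i) * (1 - y i)),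
    sum_prod_comp' n r (fun i => (1 + x i)),
    sum_prod_comp' n r (fun i => (1 - x i)),
    sum_prod_comp' n r (fun i => (1 + y i)),
    sum_prod_comp' n r (fun i => (1 - y i))]
  have e1 : ∑ i, (1 + x i) * (1 + y i) = (n : ℝ) + s := by
    have : ∀ i, (1 + x i) * (1 + y i) = 1 + (x i + (y i + x i * y i)) := fun i => by ring
    simp only [this, Finset.sum_add_distrib, hxs, hys, ← hs, Finset.sum_const,
      Finset.card_univ, Fintype.card_fin, nsmul_eq_mul, mul_one]
    ring
  have e2 : ∑ i, (1 + x i) * (1 - y i) = (n : ℝ) - s := by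
    have : ∀ i, (1 + x i) * (1 - y i) = 1 + (x i + (-y i + -(x i * y i))) := fun i => by ring
    simp only [this, Finset.sum_add_distrib, Finset.sum_neg_distrib, hxs, hys, ← hs,
      Finset.sum_const, Finset.card_univ, Fintype.card_fin, nsmul_eq_mul, mul_one]
    ring
  have e3 : ∑ i, (1 - x i) * (1 + y i) = (n : ℝ) - s := by
    have : ∀ i, (1 - x i) * (1 + y i) = 1 + (-x i + (y i + -(x i * y i))) := fun i => by ring
    simp only [this, Finset.sum_add_distrib, Finset.sum_neg_distrib, hxs, hys, ← hs,
      Finset.sum_const, Finset.card_univ, Fintype.card_fin, nsmul_eq_mul, mul_one]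
    ring
  have e4 : ∑ i, (1 - x i) * (1 - y i) = (n : ℝ) + s := by
    have : ∀ i, (1 - x i) * (1 - y i) = 1 + (-x i + (-y i + x i * y i)) := fun i => by ring
    simp only [this, Finset.sum_add_distrib, Finset.sum_neg_distrib, hxs, hys, ← hs,
      Finset.sum_const, Finset.card_univ, Fintype.card_fin, nsmul_eq_mul, mul_one]
    ring
  have e5 : ∑ i, (1 + x i) = (n : ℝ) := by
    simp [Finset.sum_add_distrib, hxs]
  have e6 : ∑ i, (1 - x i) = (n : ℝ) := by
    simp [Finset.sum_sub_distrib, hxs]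
  have e7 : ∑ i, (1 + y i) = (n : ℝ) := by
    simp [Finset.sum_add_distrib, hys]
  have e8 : ∑ i, (1 - y i) = (n : ℝ) := by
    simp [Finset.sum_sub_distrib, hys]
  rw [e1, e2, e3, e4, e5, e6, e7, e8]
  have h1 : (n : ℝ) ^ r * (1 + s / n) ^ r = ((n : ℝ) + s) ^ r := by
    rw [← mul_pow]; congr 1; field_simp
  have h2 : (n : ℝ) ^ r * (1 - s / n) ^ r = ((n : ℝ) - s) ^ r := by
    rw [← mul_pow]; congr 1; field_simp
  have hcard : (Fintype.card (Fin r → Fin n) : ℝ) = (n : ℝ) ^ r := by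
    simp [Fintype.card_fun]
  rw [hcard]
  linear_combination (-h1 - h2) / 2
end

section
/- Let (Z, Z_ρ) be a centered bivariate Gaussian vector with unit variances and correlation ρ ∈ (−1,1). Then for every u > 0, P(Z > u, Z_ρ > u) ≤ ((1+ρ)²/(2π u² √(1−ρ²))) exp(−u²/(1+ρ)). -/
/-!
The quadratic form `Q(z, w) = z² - 2ρzw + w²` is convex, so it dominates its tangent plane at
`(u, u)`, namely `2(1 - ρ)u(z + w - u)`. Hence, up to its normalising constant, the density is
bounded on the whole plane by `exp(u²/(1 + ρ)) · exp(-uz/(1 + ρ)) · exp(-uw/(1 + ρ))`, a product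
whose integral over `(u, ∞)²` is explicit and equals the right-hand side.
-/

open Real MeasureTheory Set

lemma integral_integral_le_mul_of_le {α β : Type*} [MeasurableSpace α] [MeasurableSpace β]
    {μ : Measure α} {ν : Measure β} {f : α → β → ℝ} {g : α → ℝ} {h : β → ℝ}
    (hf : ∀ x y, 0 ≤ f x y) (hg : Integrable g μ) (hh : Integrable h ν)
    (hfgh : ∀ x y, f x y ≤ g x * h y) :
    ∫ x, ∫ y, f x y ∂ν ∂μ ≤ (∫ x, g x ∂μ) * ∫ y, h y ∂ν := by
  calc ∫ x, ∫ y, f x y ∂ν ∂μ ≤ ∫ x, g x * ∫ y, h y ∂ν ∂μ := by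
        refine integral_mono_of_nonneg (ae_of_all _ fun x => integral_nonneg (hf x))
          (hg.mul_const _) (ae_of_all _ fun x => ?_)
        beta_reduce
        rw [← integral_const_mul]
        exact integral_mono_of_nonneg (ae_of_all _ (hf x)) (hh.const_mul _)
          (ae_of_all _ (hfgh x))
    _ = (∫ x, g x ∂μ) * ∫ y, h y ∂ν := integral_mul_const _ _

lemma tangent_le_bivariate_quadForm {ρ : ℝ} (hρ : ρ ^ 2 ≤ 1) (u z w : ℝ) :
    2 * (1 - ρ) * u * (z + w - u) ≤ z ^ 2 - 2 * ρ * z * w + w ^ 2 := by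
  nlinarith [sq_nonneg (z - u - ρ * (w - u)), mul_nonneg (sub_nonneg.2 hρ) (sq_nonneg (w - u))]

lemma exp_bivariate_exponent_le {ρ : ℝ} (hρ : -1 < ρ) (hρ' : ρ < 1) (u z w : ℝ) :
    exp (-(z ^ 2 - 2 * ρ * z * w + w ^ 2) / (2 * (1 - ρ ^ 2)))
      ≤ exp (u ^ 2 / (1 + ρ)) * exp (-(u / (1 + ρ)) * z) * exp (-(u / (1 + ρ)) * w) := by
  have h1ρ : 0 < 1 + ρ := by linarith
  have hden : 0 < 2 * (1 - ρ ^ 2) := by nlinarith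
  rw [← exp_add, ← exp_add, exp_le_exp, div_le_iff₀ hden]
  have hexpand : (u ^ 2 / (1 + ρ) + -(u / (1 + ρ)) * z + -(u / (1 + ρ)) * w) * (2 * (1 - ρ ^ 2))
      = -(2 * (1 - ρ) * u * (z + w - u)) := by
    field_simp
    ring
  linarith [tangent_le_bivariate_quadForm (by nlinarith : ρ ^ 2 ≤ 1) u z w]

/-- Slepian-type bound: for a centered bivariate Gaussian vector with unit variances and
correlation `ρ ∈ (−1, 1)`, for every `u > 0`,
`P(Z > u, Z_ρ > u) ≤ ((1+ρ)²/(2π u² √(1−ρ²))) exp(−u²/(1+ρ))`,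
where the probability is expressed as the integral of the bivariate normal density. -/
theorem bivariate_gaussian_joint_tail (ρ : ℝ) (hρ : -1 < ρ) (hρ' : ρ < 1) (u : ℝ) (hu : 0 < u) :
    (∫ z in Set.Ioi u, ∫ w in Set.Ioi u,
        (1 / (2 * Real.pi * Real.sqrt (1 - ρ ^ 2))) *
          Real.exp (-(z ^ 2 - 2 * ρ * z * w + w ^ 2) / (2 * (1 - ρ ^ 2))))
      ≤ (1 + ρ) ^ 2 / (2 * Real.pi * u ^ 2 * Real.sqrt (1 - ρ ^ 2)) *
          Real.exp (-u ^ 2 / (1 + ρ)) := by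
  have h1ρ : 0 < 1 + ρ := by linarith
  have hsqrt : 0 < sqrt (1 - ρ ^ 2) := sqrt_pos.2 (by nlinarith)
  set C := 1 / (2 * π * sqrt (1 - ρ ^ 2))
  set a := -(u / (1 + ρ))
  have ha : a < 0 := neg_lt_zero.2 (by positivity)
  refine (integral_integral_le_mul_of_le (fun z w => by positivity)
    ((integrableOn_exp_mul_Ioi ha u).const_mul (C * exp (u ^ 2 / (1 + ρ))))
    (integrableOn_exp_mul_Ioi ha u) fun z w => ?_).trans_eq ?_
  · calc C * exp (-(z ^ 2 - 2 * ρ * z * w + w ^ 2) / (2 * (1 - ρ ^ 2)))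
        ≤ C * (exp (u ^ 2 / (1 + ρ)) * exp (a * z) * exp (a * w)) := by
          gcongr
          exact exp_bivariate_exponent_le hρ hρ' u z w
      _ = C * exp (u ^ 2 / (1 + ρ)) * exp (a * z) * exp (a * w) := by ring
  · have hexp : exp (u ^ 2 / (1 + ρ)) * exp (a * u) * exp (a * u) = exp (-u ^ 2 / (1 + ρ)) := by
      rw [← exp_add, ← exp_add]
      congr 1
      simp only [a]
      field_simp
      ring
    rw [integral_const_mul, integral_exp_mul_Ioi ha, ← hexp]
    simp only [a, C]
    field_simp
end
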